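/- In an associative algebra with X,Y,Z satisfying the Bannai-Ito relations {X,Y}=Z+ω₃, {Z,Y}=X+ω₁, {X,Z}=Y+ω₂, the element J₊ = (Y+Z)(X-1/2)-(ω₂+ω₃)/2 satisfies J₊² = ((Y+Z)²)(-X²+X-1/4) + (ω₂+ω₃)²/4, and (Y+Z)² = Q - X² + X + ω₁ where Q = X²+Y²+Z². -/
import Mathlib


/-- J₊ = (Y+Z)(X - 1/2) - (ω₂+ω₃)/2. -/
noncomputable def Jplus {K A : Type*} [Field K] [Ring A] [Algebra K A]
    (X Y Z : A) (ω₂ ω₃ : K) : A :=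
  (Y + Z) * (X - algebraMap K A (1/2)) - algebraMap K A ((ω₂ + ω₃) / 2)

/-- In an associative algebra with the Bannai–Ito relations,
J₊² = (Y+Z)²(-X²+X-1/4) + (ω₂+ω₃)²/4 and (Y+Z)² = Q - X² + X + ω₁,
where Q = X² + Y² + Z². -/
theorem stmt9 {K A : Type*} [Field K] [CharZero K] [Ring A] [Algebra K A]
    (X Y Z : A) (ω₁ ω₂ ω₃ : K)
    (h1 : X * Y + Y * X = Z + algebraMap K A ω₃)
    (h2 : Z * Y + Y * Z = X + algebraMap K A ω₁)
    (h3 : X * Z + Z * X = Y + algebraMap K A ω₂) :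
    Jplus X Y Z ω₂ ω₃ ^ 2 =
      (Y + Z) ^ 2 * (-(X ^ 2) + X - algebraMap K A (1/4))
        + algebraMap K A ((ω₂ + ω₃) ^ 2 / 4) ∧
    (Y + Z) ^ 2 = (X ^ 2 + Y ^ 2 + Z ^ 2) - X ^ 2 + X + algebraMap K A ω₁ := by
  set W : A := Y + Z with hWdef
  set c : A := algebraMap K A (1/2 : K) with hcdef
  set s : A := algebraMap K A ((ω₂ + ω₃) / 2 : K) with hsdef
  set m : A := algebraMap K A (ω₂ + ω₃ : K) with hmdef
  set q : A := algebraMap K A (1/4 : K) with hqdef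
  set q' : A := algebraMap K A ((ω₂ + ω₃) ^ 2 / 4 : K) with hq'def
  have hcomm : ∀ (k : K) (a : A), algebraMap K A k * a = a * algebraMap K A k :=
    fun k a => Algebra.commutes k a
  -- relation: X*W + W*X = W + m
  have hS : X * W + W * X = W + m := by
    have e : X * W + W * X = (X * Y + Y * X) + (X * Z + Z * X) := by
      rw [hWdef]; noncomm_ring
    rw [e, h1, h3, hWdef, hmdef, map_add]; abel
  -- second part
  have part2 : W ^ 2 = (X ^ 2 + Y ^ 2 + Z ^ 2) - X ^ 2 + X + algebraMap K A ω₁ := by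
    have e : W ^ 2 = Y ^ 2 + Z ^ 2 + (Z * Y + Y * Z) := by rw [hWdef]; noncomm_ring
    rw [e, h2]; abel
  refine ⟨?_, part2⟩
  have h2c : c + c = (1 : A) := by
    rw [hcdef, ← map_add, ← map_one (algebraMap K A)]; norm_num
  have h2s : s + s = m := by
    rw [hsdef, hmdef, ← map_add]; norm_num
  have hcc : c * c = q := by
    rw [hcdef, hqdef, ← map_mul]; norm_num
  have hss : s * s = q' := by
    rw [hsdef, hq'def, ← map_mul]; ring_nf
  -- anticommutation of (X - c) with W
  have hanti : (X - c) * W = m - W * (X - c) := by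
    have e1 : (X - c) * W + W * (X - c) = (X * W + W * X) - (c * W + W * c) := by
      noncomm_ring
    have e2 : (X - c) * W + W * (X - c) = m := by
      rw [e1, hS, hcdef, hcomm, ← mul_add, ← hcdef, h2c, mul_one]; abel
    calc (X - c) * W = ((X - c) * W + W * (X - c)) - W * (X - c) := by abel
      _ = m - W * (X - c) := by rw [e2]
  -- main computation
  have hXc2 : (X - c) * (X - c) = X ^ 2 - X + q := by
    have e1 : (X - c) * (X - c) = X * X - (c * X + X * c) + c * c := by noncomm_ring
    rw [e1, hcdef, hcomm, ← mul_add, ← hcdef, h2c, mul_one, hcc]; noncomm_ring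
  show (W * (X - c) - s) ^ 2 = W ^ 2 * (-(X ^ 2) + X - q) + q'
  calc (W * (X - c) - s) ^ 2
      = W * ((X - c) * W) * (X - c) - ((W * (X - c)) * s + s * (W * (X - c))) + s * s := by
        noncomm_ring
    _ = W * (m - W * (X - c)) * (X - c) - ((W * (X - c)) * s + s * (W * (X - c))) + s * s := by
        rw [hanti]
    _ = W * m * (X - c) - W * W * ((X - c) * (X - c))
          - ((W * (X - c)) * s + s * (W * (X - c))) + s * s := by noncomm_ring
    _ = m * (W * (X - c)) - W * W * ((X - c) * (X - c))
          - (s + s) * (W * (X - c)) + s * s := by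
        have hmW : W * m = m * W := (hcomm _ _).symm
        have hsP : (W * (X - c)) * s = s * (W * (X - c)) := (hcomm _ _).symm
        rw [hmW, hsP, add_mul]; noncomm_ring
    _ = m * (W * (X - c)) - W * W * ((X - c) * (X - c))
          - m * (W * (X - c)) + s * s := by rw [h2s]
    _ = - (W * W * ((X - c) * (X - c))) + s * s := by abel
    _ = W ^ 2 * (-(X ^ 2) + X - q) + q' := by
        rw [hXc2, hss]; noncomm_ring
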